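/- Complementary slackness for the dual decomposition: let W : 𝕋^d → ℝ be continuous, let W(x) = W⁺(x) + K(x) + 2c be an admissible dual decomposition, and let F be a measure in the relaxed cone C attaining the lower bound, i.e. (1/2)∫ W dF = c. Then ∫ W⁺ dF = 0 and ∫ K dF = 0. (Equations (5.7)–(5.8): F must have support complementary to W⁺ in real space and to K in Fourier space.) -/

import Mathlib

/-!
Integrating `W = W⁺ + K + 2c` against `F` and using `(1/2) ∫ W dF = c` gives
`∫ W⁺ dF + ∫ K dF = 0`. Both terms are nonnegative: `W⁺ ≥ 0`, and since the cosine series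
of `K` converges absolutely it may be integrated term by term, giving
`∫ K dF = ∑ₖ aₖ F̂_c(k)` with every summand nonnegative for `F` in the cone.
-/

open MeasureTheory Real
open scoped ENNReal

theorem cos2pi_periodic : Function.Periodic (fun t : ℝ => Real.cos (2 * Real.pi * t)) 1 := by
  intro x; simp [mul_add, Real.cos_add_two_pi]

theorem sin2pi_periodic : Function.Periodic (fun t : ℝ => Real.sin (2 * Real.pi * t)) 1 := by
  intro x; simp [mul_add, Real.sin_add_two_pi]

/-- The function `x ↦ cos (2π x)` on the circle `ℝ/ℤ`. -/
noncomputable def cosA : AddCircle (1 : ℝ) → ℝ := cos2pi_periodic.lift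

/-- The function `x ↦ sin (2π x)` on the circle `ℝ/ℤ`. -/
noncomputable def sinA : AddCircle (1 : ℝ) → ℝ := sin2pi_periodic.lift

/-- The `d`-dimensional torus `𝕋^d = ℝ^d/ℤ^d`, with its Haar probability measure `volume`. -/
abbrev Torus (d : ℕ) := Fin d → AddCircle (1 : ℝ)

/-- `cos (2π k·x)` for `k ∈ ℤ^d` and `x ∈ 𝕋^d`. -/
noncomputable def tcos {d : ℕ} (k : Fin d → ℤ) (x : Torus d) : ℝ := cosA (∑ i, k i • x i)

/-- `sin (2π k·x)` for `k ∈ ℤ^d` and `x ∈ 𝕋^d`. -/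
noncomputable def tsin {d : ℕ} (k : Fin d → ℤ) (x : Torus d) : ℝ := sinA (∑ i, k i • x i)

/-- The autocorrelation of a measure `ρ` on `𝕋^d`: the pushforward of `ρ × ρ`
under `(x, y) ↦ x - y`. -/
noncomputable def autocorr {d : ℕ} (ρ : Measure (Torus d)) : Measure (Torus d) :=
  (ρ.prod ρ).map (fun p => p.1 - p.2)

/-- The relaxed cone `C`: nonnegative measures on `𝕋^d` of total mass one with vanishing
sine coefficients and nonnegative cosine coefficients for all `k ≠ 0`. -/
def inCone {d : ℕ} (F : Measure (Torus d)) : Prop :=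
  F Set.univ = 1 ∧ ∀ k : Fin d → ℤ, k ≠ 0 →
    (∫ x, tsin k x ∂F) = 0 ∧ 0 ≤ ∫ x, tcos k x ∂F

lemma continuous_cosA : Continuous cosA :=
  continuous_coinduced_dom.mpr (by
    show Continuous fun t : ℝ => Real.cos (2 * Real.pi * t)
    fun_prop)

lemma abs_cosA_le_one (x : AddCircle (1 : ℝ)) : |cosA x| ≤ 1 := by
  induction x using QuotientAddGroup.induction_on
  exact abs_cos_le_one _

lemma continuous_tcos {d : ℕ} (k : Fin d → ℤ) : Continuous (tcos k) :=
  continuous_cosA.comp (by fun_prop)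

lemma abs_tcos_le_one {d : ℕ} (k : Fin d → ℤ) (x : Torus d) : |tcos k x| ≤ 1 :=
  abs_cosA_le_one _

lemma tcos_zero {d : ℕ} (x : Torus d) : tcos 0 x = 1 := by
  simp only [tcos, Pi.zero_apply, zero_smul, Finset.sum_const_zero, cosA]
  simpa using cos2pi_periodic.lift_coe 0

section BoundedSeries

variable {X ι : Type*} {a : ι → ℝ} {f : ι → X → ℝ}

lemma norm_mul_le_abs_of_abs_le_one {r s : ℝ} (hs : |s| ≤ 1) : ‖r * s‖ ≤ |r| := by
  rw [norm_mul, norm_eq_abs, norm_eq_abs]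
  exact mul_le_of_le_one_right (abs_nonneg r) hs

lemma continuous_tsum_mul_of_abs_le_one [TopologicalSpace X] (hf : ∀ i, Continuous (f i))
    (hf_le : ∀ i x, |f i x| ≤ 1) (ha : Summable a) :
    Continuous fun x => ∑' i, a i * f i x :=
  continuous_tsum (fun i => continuous_const.mul (hf i)) ha.abs fun i x =>
    norm_mul_le_abs_of_abs_le_one (hf_le i x)

lemma integral_tsum_mul_of_abs_le_one [MeasurableSpace X] [Countable ι] {μ : Measure X}
    [IsFiniteMeasure μ] (hf : ∀ i, AEStronglyMeasurable (f i) μ) (hf_le : ∀ i x, |f i x| ≤ 1)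
    (ha : Summable a) :
    ∫ x, ∑' i, a i * f i x ∂μ = ∑' i, a i * ∫ x, f i x ∂μ := by
  have hint : ∀ i, Integrable (fun x => a i * f i x) μ := fun i =>
    (Integrable.of_bound (hf i) 1 (.of_forall (hf_le i))).const_mul (a i)
  have hnorm : ∀ i, ∫ x, ‖a i * f i x‖ ∂μ ≤ |a i| * μ.real Set.univ := fun i =>
    calc ∫ x, ‖a i * f i x‖ ∂μ ≤ ∫ _, |a i| ∂μ :=
          integral_mono (hint i).norm (integrable_const _) fun x =>
            norm_mul_le_abs_of_abs_le_one (hf_le i x)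
      _ = |a i| * μ.real Set.univ := by simp [mul_comm]
  have hsum : Summable fun i => ∫ x, ‖a i * f i x‖ ∂μ :=
    .of_nonneg_of_le (fun i => integral_nonneg fun x => norm_nonneg _) hnorm
      (ha.abs.mul_right _)
  rw [← integral_tsum_of_summable_integral_norm hint hsum]
  exact tsum_congr fun i => integral_const_mul _ _

end BoundedSeries

section RelaxedCone

variable {d : ℕ} {F : Measure (Torus d)}

lemma inCone.isProbabilityMeasure (hF : inCone F) : IsProbabilityMeasure F :=
  ⟨hF.1⟩

lemma inCone.integral_tcos_nonneg (hF : inCone F) (k : Fin d → ℤ) : 0 ≤ ∫ x, tcos k x ∂F := by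
  have := hF.isProbabilityMeasure
  rcases eq_or_ne k 0 with rfl | hk
  · simp [tcos_zero]
  · exact (hF.2 k hk).2

lemma inCone.integral_cosineSeries_nonneg (hF : inCone F) {a : (Fin d → ℤ) → ℝ}
    (ha : ∀ k, 0 ≤ a k) (ha_sum : Summable a) :
    0 ≤ ∫ x, ∑' k, a k * tcos k x ∂F := by
  have := hF.isProbabilityMeasure
  rw [integral_tsum_mul_of_abs_le_one (fun k => (continuous_tcos k).aestronglyMeasurable)
    abs_tcos_le_one ha_sum]
  exact tsum_nonneg fun k => mul_nonneg (ha k) (hF.integral_tcos_nonneg k)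

end RelaxedCone

theorem stmt10_general {d : ℕ} (W Wp : Torus d → ℝ) (a : (Fin d → ℤ) → ℝ) (c : ℝ)
    (hWpc : Continuous Wp) (hWp : ∀ x, 0 ≤ Wp x)
    (ha_nonneg : ∀ k, k ≠ 0 → 0 ≤ a k) (ha0 : a 0 = 0)
    (ha_sum : Summable a)
    (hdecomp : ∀ x, W x = Wp x + (∑' k : Fin d → ℤ, a k * tcos k x) + 2 * c)
    (F : Measure (Torus d)) (hF : inCone F)
    (hattain : (1/2) * ∫ x, W x ∂F = c) :
    (∫ x, Wp x ∂F) = 0 ∧ (∫ x, (∑' k : Fin d → ℤ, a k * tcos k x) ∂F) = 0 := by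
  have := hF.isProbabilityMeasure
  have ha : ∀ k, 0 ≤ a k := fun k => by
    rcases eq_or_ne k 0 with rfl | hk
    exacts [ha0.ge, ha_nonneg k hk]
  have hK_int : Integrable (fun x => ∑' k, a k * tcos k x) F :=
    (continuous_tsum_mul_of_abs_le_one continuous_tcos abs_tcos_le_one ha_sum)
      |>.integrable_of_hasCompactSupport (.of_compactSpace _)
  have hWp_int : Integrable Wp F := hWpc.integrable_of_hasCompactSupport (.of_compactSpace Wp)
  have hW : ∫ x, W x ∂F = ∫ x, Wp x ∂F + ∫ x, ∑' k, a k * tcos k x ∂F + 2 * c := by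
    rw [integral_congr_ae (.of_forall hdecomp), integral_add _ (integrable_const _),
      integral_add hWp_int hK_int]
    · simp
    · exact hWp_int.add hK_int
  have hWp_nonneg : 0 ≤ ∫ x, Wp x ∂F := integral_nonneg hWp
  have hK_nonneg : 0 ≤ ∫ x, ∑' k, a k * tcos k x ∂F := hF.integral_cosineSeries_nonneg ha ha_sum
  constructor <;> linarith

/-- Complementary slackness (equations (5.7)-(5.8)): if `W = W⁺ + K + 2c` is an admissible
dual decomposition and `F` in the relaxed cone attains the lower bound `(1/2) ∫ W dF = c`,
then `∫ W⁺ dF = 0` and `∫ K dF = 0`. -/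
theorem stmt10 {d : ℕ} (W Wp : Torus d → ℝ) (a : (Fin d → ℤ) → ℝ) (c : ℝ)
    (hWc : Continuous W) (hWpc : Continuous Wp) (hWp : ∀ x, 0 ≤ Wp x)
    (ha_symm : ∀ k, a (-k) = a k) (ha_nonneg : ∀ k, k ≠ 0 → 0 ≤ a k) (ha0 : a 0 = 0)
    (ha_sum : Summable a)
    (hdecomp : ∀ x, W x = Wp x + (∑' k : Fin d → ℤ, a k * tcos k x) + 2 * c)
    (F : Measure (Torus d)) (hF : inCone F)
    (hattain : (1/2) * ∫ x, W x ∂F = c) :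
    (∫ x, Wp x ∂F) = 0 ∧ (∫ x, (∑' k : Fin d → ℤ, a k * tcos k x) ∂F) = 0 :=
  stmt10_general W Wp a c hWpc hWp ha_nonneg ha0 ha_sum hdecomp F hF hattain
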